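/- arXiv:1904.08728 — 2 statements merged into one kernel-verified Lean document; each statement's English description precedes it below -/
import Mathlib

section
/- Let A, B ∈ ℂ with A ≠ 0 and B ≠ 0, and let F = A·x₂³ + x₀x₃² + x₁²x₄ - x₀x₂x₄ + B·x₁x₂x₃. A diagonal matrix diag(λ₀,λ₁,λ₂,λ₃,λ₄) ∈ SL(5,ℂ) satisfies F(λ₀x₀,...,λ₄x₄) = F(x₀,...,x₄) if and only if there exists λ ∈ ℂ* such that (λ₀,λ₁,λ₂,λ₃,λ₄) = (λ²,λ,1,λ⁻¹,λ⁻²). -/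
/-!
Comparing coefficients of the five monomials turns invariance into the multiplicative system
`λ₂³ = 1`, `λ₀λ₃² = 1`, `λ₁²λ₄ = 1`, `λ₀λ₂λ₄ = 1`, `λ₁λ₂λ₃ = 1`. Dividing the determinant by
`λ₁λ₂λ₃` gives `λ₀λ₄ = 1`, hence `λ₂ = 1` from the fourth equation, and the remaining equations
then express every `λᵢ` as a power of `λ = λ₁`.
-/

variable {K : Type*} [Field K]

def cubicForm (A B : K) (x : Fin 5 → K) : K :=
  A * x 2 ^ 3 + x 0 * x 3 ^ 2 + x 1 ^ 2 * x 4 - x 0 * x 2 * x 4 + B * x 1 * x 2 * x 3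

theorem monomial_eqs_of_cubicForm_mul_eq {A B : K} (hA : A ≠ 0) (hB : B ≠ 0) {l : Fin 5 → K}
    (h : ∀ x, cubicForm A B (l * x) = cubicForm A B x) :
    l 2 ^ 3 = 1 ∧ l 0 * l 3 ^ 2 = 1 ∧ l 1 ^ 2 * l 4 = 1 ∧ l 0 * l 2 * l 4 = 1 ∧
      l 1 * l 2 * l 3 = 1 := by
  have h222 : A * l 2 ^ 3 = A * 1 := by simpa [cubicForm] using h ![0, 0, 1, 0, 0]
  have h033 : l 0 * l 3 ^ 2 = 1 := by simpa [cubicForm] using h ![1, 0, 0, 1, 0]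
  have h114 : l 1 ^ 2 * l 4 = 1 := by simpa [cubicForm] using h ![0, 1, 0, 0, 1]
  have h024 : A * l 2 ^ 3 - l 0 * l 2 * l 4 = A - 1 := by
    simpa [cubicForm, mul_pow] using h ![1, 0, 1, 0, 1]
  have h123 : A * l 2 ^ 3 + B * (l 1 * l 2 * l 3) = A + B * 1 := by
    simpa [cubicForm, mul_pow, mul_assoc] using h ![0, 1, 1, 1, 0]
  refine ⟨mul_left_cancel₀ hA h222, h033, h114, by linear_combination h222 - h024, ?_⟩
  exact mul_left_cancel₀ hB (by linear_combination h123 - h222)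

theorem eq_weights_of_monomial_eqs {l : Fin 5 → K} (hdet : l 0 * l 1 * l 2 * l 3 * l 4 = 1)
    (h : l 2 ^ 3 = 1 ∧ l 0 * l 3 ^ 2 = 1 ∧ l 1 ^ 2 * l 4 = 1 ∧ l 0 * l 2 * l 4 = 1 ∧
      l 1 * l 2 * l 3 = 1) :
    ∃ c : K, c ≠ 0 ∧ l = ![c ^ 2, c, 1, c⁻¹, (c ^ 2)⁻¹] := by
  obtain ⟨-, e03, e14, e024, e123⟩ := h
  have e04 : l 0 * l 4 = 1 := by linear_combination hdet - l 0 * l 4 * e123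
  have e2 : l 2 = 1 := by linear_combination e024 - l 2 * e04
  have e13 : l 1 * l 3 = 1 := by linear_combination e123 - l 1 * l 3 * e2
  have hl1 : l 1 ≠ 0 := left_ne_zero_of_mul_eq_one e13
  have e3 : l 3 = (l 1)⁻¹ := eq_inv_of_mul_eq_one_right e13
  have e4 : l 4 = (l 1 ^ 2)⁻¹ := eq_inv_of_mul_eq_one_right e14
  have e0 : l 0 = l 1 ^ 2 := by
    rw [e3, inv_pow] at e03
    exact eq_of_mul_inv_eq_one e03
  refine ⟨l 1, hl1, ?_⟩
  ext i
  fin_cases i <;> simp [e0, e2, e3, e4]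

theorem cubicForm_weights_mul (A B : K) {c : K} (hc : c ≠ 0) (x : Fin 5 → K) :
    cubicForm A B (![c ^ 2, c, 1, c⁻¹, (c ^ 2)⁻¹] * x) = cubicForm A B x := by
  simp only [cubicForm, Pi.mul_apply, Matrix.cons_val]
  field_simp

/-- For `A, B ≠ 0` and `F = A x₂³ + x₀x₃² + x₁²x₄ - x₀x₂x₄ + B x₁x₂x₃`, a diagonal
matrix `diag(λ₀,...,λ₄) ∈ SL(5,ℂ)` fixes `F` under substitution iff it is of the
form `diag(λ²,λ,1,λ⁻¹,λ⁻²)` for some `λ ∈ ℂ*`. -/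
theorem stmt_6 (A B : ℂ) (hA : A ≠ 0) (hB : B ≠ 0) (l : Fin 5 → ℂ)
    (hdet : l 0 * l 1 * l 2 * l 3 * l 4 = 1) :
    (∀ x : Fin 5 → ℂ,
        A * (l 2 * x 2) ^ 3 + (l 0 * x 0) * (l 3 * x 3) ^ 2
          + (l 1 * x 1) ^ 2 * (l 4 * x 4) - (l 0 * x 0) * (l 2 * x 2) * (l 4 * x 4)
          + B * (l 1 * x 1) * (l 2 * x 2) * (l 3 * x 3) =
        A * x 2 ^ 3 + x 0 * x 3 ^ 2 + x 1 ^ 2 * x 4 - x 0 * x 2 * x 4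
          + B * x 1 * x 2 * x 3) ↔
      ∃ c : ℂ, c ≠ 0 ∧ l = ![c ^ 2, c, 1, c⁻¹, (c ^ 2)⁻¹] := by
  refine ⟨fun h => eq_weights_of_monomial_eqs hdet (monomial_eqs_of_cubicForm_mul_eq hA hB h),
    ?_⟩
  rintro ⟨c, hc, rfl⟩ x
  exact cubicForm_weights_mul A B hc x
end

section
/- Suppose a₀, a₁, a₂, a₃, a₄ ∈ ℂ with a₁, a₂, a₃, a₄ all nonzero and 4a₀a₁a₂ + a₃a₄² = 0. Then there exist s₀, s₁, s₂, s₃, s₄ ∈ ℂ* satisfying a₁s₀s₃² = 1, a₂s₁²s₄ = 1, a₃s₀s₂s₄ = -1, and 4a₀s₂ = a₄²s₁²s₃². -/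
theorem stmt_17_general (a0 a1 a2 a3 a4 : ℂ)
    (h1 : a1 ≠ 0) (h2 : a2 ≠ 0) (h3 : a3 ≠ 0)
    (h : 4 * a0 * a1 * a2 + a3 * a4 ^ 2 = 0) :
    ∃ s0 s1 s2 s3 s4 : ℂ,
      s0 ≠ 0 ∧ s1 ≠ 0 ∧ s2 ≠ 0 ∧ s3 ≠ 0 ∧ s4 ≠ 0 ∧
      a1 * s0 * s3 ^ 2 = 1 ∧ a2 * s1 ^ 2 * s4 = 1 ∧
      a3 * s0 * s2 * s4 = -1 ∧ 4 * a0 * s2 = a4 ^ 2 * s1 ^ 2 * s3 ^ 2 := by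
  -- With s₁ = s₃ = 1 the first three equations determine s₀, s₄ and s₂,
  -- and the fourth then becomes the hypothesis `h`.
  refine ⟨a1⁻¹, 1, -(a1 * a2) / a3, 1, a2⁻¹, by simpa, one_ne_zero, by simp [*], one_ne_zero,
    by simpa, ?_, ?_, ?_, ?_⟩ <;> field_simp
  linear_combination -h

/-- If `a₁,a₂,a₃,a₄ ≠ 0` and `4a₀a₁a₂ + a₃a₄² = 0`, then there exist
`s₀,...,s₄ ∈ ℂ*` with `a₁s₀s₃² = 1`, `a₂s₁²s₄ = 1`, `a₃s₀s₂s₄ = -1`, and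
`4a₀s₂ = a₄²s₁²s₃²`. -/
theorem stmt_17 (a0 a1 a2 a3 a4 : ℂ)
    (h1 : a1 ≠ 0) (h2 : a2 ≠ 0) (h3 : a3 ≠ 0) (h4 : a4 ≠ 0)
    (h : 4 * a0 * a1 * a2 + a3 * a4 ^ 2 = 0) :
    ∃ s0 s1 s2 s3 s4 : ℂ,
      s0 ≠ 0 ∧ s1 ≠ 0 ∧ s2 ≠ 0 ∧ s3 ≠ 0 ∧ s4 ≠ 0 ∧
      a1 * s0 * s3 ^ 2 = 1 ∧ a2 * s1 ^ 2 * s4 = 1 ∧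
      a3 * s0 * s2 * s4 = -1 ∧ 4 * a0 * s2 = a4 ^ 2 * s1 ^ 2 * s3 ^ 2 :=
  stmt_17_general a0 a1 a2 a3 a4 h1 h2 h3 h
end
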